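/- Under hypotheses (ρ), (A1), and (A3), for every u = (u₁,u₂) ∈ E: ∑_{t=1}^T [ ρ₁(t)(φ₁(Δu₁(t)), Δu₁(t)) + ρ₂(t)(φ₂(Δu₂(t)), Δu₂(t)) + ρ₃(t)(φ₃(u₁(t)), u₁(t)) + ρ₄(t)(φ₄(u₂(t)), u₂(t)) ] ≥ (1/2^{θ−1}) · min{c₁ρ₁⁻, c₂ρ₂⁻, c₃ρ₃⁻, c₄ρ₄⁻} · ‖u‖^θ, where ρ_i⁻ = min_{t∈ℤ[1,T]} ρ_i(t). Consequently ⟨I'(u),u⟩/‖u‖ → +∞ as ‖u‖ → ∞, i.e., I' is coercive on E. -/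

import Mathlib

/- STATEMENT 10: under (ρ), (A1) and (A3), for every `u ∈ E`,
`∑_{t=1}^T [ρ₁(t)(φ₁(Δu₁),Δu₁) + ρ₂(t)(φ₂(Δu₂),Δu₂) + ρ₃(t)(φ₃(u₁),u₁) + ρ₄(t)(φ₄(u₂),u₂)]
 ≥ (1/2^{θ−1})·min{c₁ρ₁⁻, c₂ρ₂⁻, c₃ρ₃⁻, c₄ρ₄⁻}·‖u‖^θ`  (coercivity of `I'`). -/

open scoped RealInnerProductSpace

noncomputable section

abbrev Rn (N : ℕ) := EuclideanSpace ℝ (Fin N)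

/-- `u : ℤ → ℝ^N` is `T`-periodic. -/
def IsPeriodic (N : ℕ) (T : ℕ) (u : ℤ → Rn N) : Prop := ∀ t : ℤ, u (t + T) = u t

/-- Forward difference. -/
def fdiff (N : ℕ) (u : ℤ → Rn N) (t : ℤ) : Rn N := u (t + 1) - u t

/-- The norm `‖·‖_{E_T}`. -/
def normET (N T : ℕ) (θ : ℝ) (u : ℤ → Rn N) : ℝ :=
  (∑ t ∈ Finset.Icc (1 : ℤ) (T : ℤ), ‖fdiff N u t‖ ^ θ +
    ∑ t ∈ Finset.Icc (1 : ℤ) (T : ℤ), ‖u t‖ ^ θ) ^ (1 / θ)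

/-- The norm `‖u‖ = ‖u₁‖_{E_T} + ‖u₂‖_{E_T}` on `E`. -/
def normE (N T : ℕ) (θ : ℝ) (u : (ℤ → Rn N) × (ℤ → Rn N)) : ℝ :=
  normET N T θ u.1 + normET N T θ u.2

/-- `min_{t ∈ ℤ[1,T]} f(t)` (for `T ≥ 1`). -/
def minIcc (T : ℕ) (hT : 1 ≤ T) (f : ℤ → ℝ) : ℝ :=
  (Finset.Icc (1 : ℤ) (T : ℤ)).inf' (Finset.nonempty_Icc.mpr (by exact_mod_cast hT)) f

/-! Testing each monotonicity inequality (A3) against `y = 0` gives `(φᵢ(x), x) ≥ cᵢ|x|^θ`, so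
every summand dominates `m` times the `θ`-th power of the corresponding norm, where `m` is the
minimum of the `cᵢρᵢ⁻`. Summing over a period yields `m (‖u₁‖^θ_{E_T} + ‖u₂‖^θ_{E_T})`, and the
convexity bound `(a + b)^θ ≤ 2^{θ-1} (a^θ + b^θ)` converts this into `m ‖u‖^θ / 2^{θ-1}`. -/

lemma Real.rpow_add_le_mul_rpow_add_rpow {p a b : ℝ} (ha : 0 ≤ a) (hb : 0 ≤ b) (hp : 1 ≤ p) :
    (a + b) ^ p ≤ (2 : ℝ) ^ (p - 1) * (a ^ p + b ^ p) := by
  lift a to NNReal using ha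
  lift b to NNReal using hb
  exact_mod_cast NNReal.rpow_add_le_mul_rpow_add_rpow a b hp

lemma mul_norm_rpow_le_inner_self {E : Type*} [NormedAddCommGroup E] [InnerProductSpace ℝ E]
    {φ : E → E} {c θ : ℝ} (hφ₀ : φ 0 = 0)
    (hφ : ∀ x y, c * ‖x - y‖ ^ θ ≤ ⟪φ x - φ y, x - y⟫) (x : E) :
    c * ‖x‖ ^ θ ≤ ⟪φ x, x⟫ := by
  simpa [hφ₀] using hφ x 0

lemma mul_sum_norm_rpow_le_sum_mul_inner {ι E : Type*} [NormedAddCommGroup E]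
    [InnerProductSpace ℝ E] {s : Finset ι} {ρ : ι → ℝ} {φ : E → E} {c θ r m : ℝ}
    (hc : 0 ≤ c) (hρ : ∀ t ∈ s, r ≤ ρ t) (hρ₀ : ∀ t ∈ s, 0 ≤ ρ t) (hm : m ≤ c * r)
    (hφ : ∀ x, c * ‖x‖ ^ θ ≤ ⟪φ x, x⟫) (v : ι → E) :
    m * ∑ t ∈ s, ‖v t‖ ^ θ ≤ ∑ t ∈ s, ρ t * ⟪φ (v t), v t⟫ := by
  rw [Finset.mul_sum]
  refine Finset.sum_le_sum fun t ht => ?_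
  calc m * ‖v t‖ ^ θ ≤ c * r * ‖v t‖ ^ θ := by gcongr
    _ ≤ c * ρ t * ‖v t‖ ^ θ := by gcongr; exact hρ t ht
    _ = ρ t * (c * ‖v t‖ ^ θ) := by ring
    _ ≤ ρ t * ⟪φ (v t), v t⟫ := mul_le_mul_of_nonneg_left (hφ (v t)) (hρ₀ t ht)

lemma minIcc_le {T : ℕ} (hT : 1 ≤ T) (f : ℤ → ℝ) {t : ℤ} (ht : t ∈ Finset.Icc (1 : ℤ) T) :
    minIcc T hT f ≤ f t :=
  Finset.inf'_le _ ht

lemma minIcc_pos {T : ℕ} (hT : 1 ≤ T) {f : ℤ → ℝ}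
    (hf : ∀ t ∈ Finset.Icc (1 : ℤ) T, 0 < f t) : 0 < minIcc T hT f :=
  (Finset.lt_inf'_iff _).mpr hf

lemma normET_nonneg (N T : ℕ) (θ : ℝ) (u : ℤ → Rn N) : 0 ≤ normET N T θ u := by
  unfold normET; positivity

lemma normET_rpow (N T : ℕ) {θ : ℝ} (hθ : θ ≠ 0) (u : ℤ → Rn N) :
    normET N T θ u ^ θ = ∑ t ∈ Finset.Icc (1 : ℤ) T, ‖fdiff N u t‖ ^ θ +
      ∑ t ∈ Finset.Icc (1 : ℤ) T, ‖u t‖ ^ θ := by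
  rw [normET, ← Real.rpow_mul (by positivity), one_div, inv_mul_cancel₀ hθ, Real.rpow_one]

lemma normE_rpow_le (N T : ℕ) {θ : ℝ} (hθ : 1 ≤ θ) (u : (ℤ → Rn N) × (ℤ → Rn N)) :
    normE N T θ u ^ θ ≤ (2 : ℝ) ^ (θ - 1) * (normET N T θ u.1 ^ θ + normET N T θ u.2 ^ θ) :=
  Real.rpow_add_le_mul_rpow_add_rpow (normET_nonneg ..) (normET_nonneg ..) hθ

theorem coercivity_of_I'_general (T N : ℕ) (hT : 1 < T)
    (ρ : Fin 4 → ℤ → ℝ) (φv : Fin 4 → Rn N → Rn N)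
    (θ : ℝ) (c : Fin 4 → ℝ) (hθ : 1 < θ) (hc : ∀ i, 0 < c i)
    -- hypothesis (ρ)
    (hρpos : ∀ i, ∀ t ∈ Finset.Icc (1 : ℤ) (T : ℤ), 0 < ρ i t)
    -- hypothesis (A1)
    (hφzero : ∀ i, φv i 0 = 0)
    -- hypothesis (A3)
    (hA3 : ∀ i, ∀ x y : Rn N, c i * ‖x - y‖ ^ θ ≤ ⟪φv i x - φv i y, x - y⟫)
    (u : (ℤ → Rn N) × (ℤ → Rn N)) :
    (1 / (2 : ℝ) ^ (θ - 1)) *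
        min (min (c 0 * minIcc T hT.le (ρ 0)) (c 1 * minIcc T hT.le (ρ 1)))
            (min (c 2 * minIcc T hT.le (ρ 2)) (c 3 * minIcc T hT.le (ρ 3))) *
        normE N T θ u ^ θ
      ≤ ∑ t ∈ Finset.Icc (1 : ℤ) (T : ℤ),
          (ρ 0 t * ⟪φv 0 (fdiff N u.1 t), fdiff N u.1 t⟫
            + ρ 1 t * ⟪φv 1 (fdiff N u.2 t), fdiff N u.2 t⟫
            + ρ 2 t * ⟪φv 2 (u.1 t), u.1 t⟫
            + ρ 3 t * ⟪φv 3 (u.2 t), u.2 t⟫) := by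
  set m := min (min (c 0 * minIcc T hT.le (ρ 0)) (c 1 * minIcc T hT.le (ρ 1)))
    (min (c 2 * minIcc T hT.le (ρ 2)) (c 3 * minIcc T hT.le (ρ 3)))
  have hm : ∀ i, m ≤ c i * minIcc T hT.le (ρ i) := by
    intro i; fin_cases i <;> simp [m]
  have hm₀ : 0 ≤ m := by
    have h i := (mul_pos (hc i) (minIcc_pos hT.le (hρpos i))).le
    exact le_min (le_min (h 0) (h 1)) (le_min (h 2) (h 3))
  have hterm i (v : ℤ → Rn N) :=
    mul_sum_norm_rpow_le_sum_mul_inner (hc i).le (fun t ↦ minIcc_le hT.le (ρ i))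
      (fun t ht ↦ (hρpos i t ht).le) (hm i) (mul_norm_rpow_le_inner_self (hφzero i) (hA3 i)) v
  calc 1 / (2 : ℝ) ^ (θ - 1) * m * normE N T θ u ^ θ
      ≤ 1 / (2 : ℝ) ^ (θ - 1) * m *
          ((2 : ℝ) ^ (θ - 1) * (normET N T θ u.1 ^ θ + normET N T θ u.2 ^ θ)) := by
        gcongr; exact normE_rpow_le N T hθ.le u
    _ = m * (normET N T θ u.1 ^ θ + normET N T θ u.2 ^ θ) := by field_simp
    _ ≤ _ := by
        rw [normET_rpow N T (by positivity), normET_rpow N T (by positivity)]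
        simp only [Finset.sum_add_distrib]
        linarith [hterm 0 (fdiff N u.1), hterm 1 (fdiff N u.2), hterm 2 u.1, hterm 3 u.2]

theorem coercivity_of_I' (T N : ℕ) (hT : 1 < T)
    (ρ : Fin 4 → ℤ → ℝ) (φv : Fin 4 → Rn N → Rn N) (Φv : Fin 4 → Rn N → ℝ)
    (θ : ℝ) (c : Fin 4 → ℝ) (hθ : 1 < θ) (hc : ∀ i, 0 < c i)
    -- hypothesis (ρ)
    (hρper : ∀ i, ∀ t : ℤ, ρ i (t + T) = ρ i t)
    (hρpos : ∀ i, ∀ t ∈ Finset.Icc (1 : ℤ) (T : ℤ), 0 < ρ i t)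
    -- hypothesis (A1)
    (hφhomeo : ∀ i, IsHomeomorph (φv i))
    (hφzero : ∀ i, φv i 0 = 0)
    (hφgrad : ∀ i, ∀ x : Rn N, φv i x = gradient (Φv i) x)
    (hΦC1 : ∀ i, ContDiff ℝ 1 (Φv i))
    (hΦnonneg : ∀ i, ∀ x : Rn N, 0 ≤ Φv i x)
    (hΦconv : ∀ i, StrictConvexOn ℝ Set.univ (Φv i))
    (hΦzero : ∀ i, Φv i 0 = 0)
    -- hypothesis (A3)
    (hA3 : ∀ i, ∀ x y : Rn N, c i * ‖x - y‖ ^ θ ≤ ⟪φv i x - φv i y, x - y⟫)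
    (u : (ℤ → Rn N) × (ℤ → Rn N))
    (hu₁ : IsPeriodic N T u.1) (hu₂ : IsPeriodic N T u.2) :
    (1 / (2 : ℝ) ^ (θ - 1)) *
        min (min (c 0 * minIcc T hT.le (ρ 0)) (c 1 * minIcc T hT.le (ρ 1)))
            (min (c 2 * minIcc T hT.le (ρ 2)) (c 3 * minIcc T hT.le (ρ 3))) *
        normE N T θ u ^ θ
      ≤ ∑ t ∈ Finset.Icc (1 : ℤ) (T : ℤ),
          (ρ 0 t * ⟪φv 0 (fdiff N u.1 t), fdiff N u.1 t⟫
            + ρ 1 t * ⟪φv 1 (fdiff N u.2 t), fdiff N u.2 t⟫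
            + ρ 2 t * ⟪φv 2 (u.1 t), u.1 t⟫
            + ρ 3 t * ⟪φv 3 (u.2 t), u.2 t⟫) :=
  coercivity_of_I'_general T N hT ρ φv θ c hθ hc hρpos hφzero hA3 u
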